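/- arXiv:2205.05160 — 3 statements merged into one kernel-verified Lean document; each statement's English description precedes it below -/
import Mathlib

section
/- For any continuously differentiable vector field v on a bounded domain Ω vanishing on the boundary, the EMAC trilinear form satisfies c(v,v,v) = 0, where c(u,v,w) = (2D(u)v, w) + ((∇·u)v, w) with (·,·) the L² inner product. -/
open scoped BigOperators
open MeasureTheory

/-- Partial derivative of the `i`-th component of `u` in direction `j`. -/
noncomputable def pd1 {d : ℕ} (u : (Fin d → ℝ) → (Fin d → ℝ)) (i j : Fin d)
    (x : Fin d → ℝ) : ℝ :=
  fderiv ℝ (fun y => u y i) x (Pi.single j 1)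

/-- The EMAC trilinear form `c(u,v,w) = (2D(u)v, w) + ((∇·u)v, w)`. -/
noncomputable def emacC1 {d : ℕ} (Ω : Set (Fin d → ℝ))
    (u v w : (Fin d → ℝ) → (Fin d → ℝ)) : ℝ :=
  ∫ x in Ω,
    ((∑ i, ∑ j, (pd1 u i j x + pd1 u j i x) * v x j * w x i)
      + (∑ j, pd1 u j j x) * (∑ i, v x i * w x i))

/-!
Pointwise, `2 (D(v) v)·v + (∇·v) |v|² = ∇·(|v|² v)`. Extended by zero off `closure Ω`, the field
`|v|² v` is differentiable everywhere: at a boundary point both `|v|²` and `v` vanish, and `v` is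
differentiable within `closure Ω` there, so the field is `o(|y - x|)`. It has compact support and
bounded derivative, so integrating its divergence over the whole space against the constant `1`
by parts gives `0`.
-/

open Filter Topology Set Matrix

theorem IsCompact.exists_bound_of_eventually_nhdsWithin {X : Type*} [TopologicalSpace X]
    {K t : Set X} (hK : IsCompact K) {g : X → ℝ} (h : ∀ z ∈ K, ∃ C, ∀ᶠ x in 𝓝[t] z, g x ≤ C) :
    ∃ C, ∀ x ∈ K ∩ t, g x ≤ C := by
  refine hK.induction_on (p := fun s => ∃ C, ∀ x ∈ s ∩ t, g x ≤ C) ⟨0, by simp⟩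
    (fun s u hsu ⟨C, hC⟩ => ⟨C, fun x hx => hC x ⟨hsu hx.1, hx.2⟩⟩)
    (fun s u ⟨C, hC⟩ ⟨D, hD⟩ => ⟨max C D, ?_⟩) fun z hz => ?_
  · rintro x ⟨hs | hu, hx⟩
    · exact (hC x ⟨hs, hx⟩).trans (le_max_left C D)
    · exact (hD x ⟨hu, hx⟩).trans (le_max_right C D)
  · obtain ⟨C, hC⟩ := h z hz
    exact ⟨_, mem_nhdsWithin_of_mem_nhds (eventually_nhdsWithin_iff.1 hC),
      ⟨C, fun x hx => hx.1 hx.2⟩⟩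

section FDerivBound

variable {E F : Type*} [NormedAddCommGroup E] [NormedSpace ℝ E] [NormedAddCommGroup F]
  [NormedSpace ℝ F] {f : E → F} {s : Set E}

/- `s` need not have unique derivatives (think of an outward cusp), so `fderivWithin ℝ f s` need
not be continuous; the bound comes from the local continuous derivative of `ContDiffWithinAt`. -/
theorem ContDiffWithinAt.exists_bound_fderiv {z : E} (hf : ContDiffWithinAt ℝ 1 f s z) :
    ∃ C, ∀ᶠ x in 𝓝[interior s] z, ‖fderiv ℝ f x‖ ≤ C := by
  obtain ⟨u, hu, -, -, f', hf'u, hf'c⟩ :=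
    (contDiffWithinAt_succ_iff_hasFDerivWithinAt' (n := 0) (by simp)).1 (by simpa using hf)
  have hbd : ∀ᶠ y in 𝓝[s] z, ‖f' y‖ < ‖f' z‖ + 1 :=
    hf'c.continuousWithinAt.norm.eventually_lt_const (lt_add_one _)
  refine ⟨‖f' z‖ + 1, ?_⟩
  filter_upwards [nhdsWithin_mono _ interior_subset
    (hbd.and (nhdsWithin_mono _ (subset_insert z s) hu)), self_mem_nhdsWithin]
    with y ⟨hy, hyu⟩ hys
  rw [((hf'u y hyu).hasFDerivAt (mem_interior_iff_mem_nhds.1 hys)).fderiv]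
  exact hy.le

theorem ContDiffOn.exists_bound_fderiv (hs : IsCompact s) (hf : ContDiffOn ℝ 1 f s) :
    ∃ C, ∀ x ∈ interior s, ‖fderiv ℝ f x‖ ≤ C := by
  obtain ⟨C, hC⟩ :=
    hs.exists_bound_of_eventually_nhdsWithin fun z hz => (hf z hz).exists_bound_fderiv
  exact ⟨C, fun x hx => hC x ⟨interior_subset hx, hx⟩⟩

end FDerivBound

theorem integral_fderiv_apply_eq_zero {E G : Type*} [NormedAddCommGroup E] [NormedSpace ℝ E]
    [FiniteDimensional ℝ E] [MeasurableSpace E] [BorelSpace E] {μ : Measure E}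
    [μ.IsAddHaarMeasure] [NormedAddCommGroup G] [NormedSpace ℝ G] {f : E → G} {w : E}
    (hf : Integrable f μ) (hf' : Integrable (fun x => fderiv ℝ f x w) μ)
    (hd : Differentiable ℝ f) :
    ∫ x, fderiv ℝ f x w ∂μ = 0 := by
  simpa using integral_smul_fderiv_eq_neg_fderiv_smul_of_integrable (μ := μ)
    (f := fun _ => (1 : ℝ)) (g := f) (v := w) (by simp) (by simpa using hf')
    (by simpa using hf) (fun x _ => differentiableAt_const _) (fun x _ => hd x)

noncomputable def divergence {d : ℕ} (F : (Fin d → ℝ) → (Fin d → ℝ)) (x : Fin d → ℝ) : ℝ :=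
  ∑ i, fderiv ℝ F x (Pi.single i 1) i

theorem integral_divergence_eq_zero {d : ℕ} {F : (Fin d → ℝ) → (Fin d → ℝ)}
    (hF : Integrable F) (hF' : Integrable (fderiv ℝ F)) (hd : Differentiable ℝ F) :
    ∫ x, divergence F x = 0 := by
  have happly (i : Fin d) : Integrable (fun x => fderiv ℝ F x (Pi.single i 1)) :=
    (ContinuousLinearMap.apply ℝ _ (Pi.single i 1)).integrable_comp hF'
  simp only [divergence]
  rw [integral_finsetSum _ fun i _ => (happly i).eval i]
  refine Finset.sum_eq_zero fun i _ => ?_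
  simpa [integral_fderiv_apply_eq_zero hF (happly i) hd] using
    (ContinuousLinearMap.proj (R := ℝ) (φ := fun _ : Fin d => ℝ) i).integral_comp_comm (happly i)

section ZeroExtension

variable {E G H : Type*} [NormedAddCommGroup E] [NormedSpace ℝ E] [NormedAddCommGroup G]
  [NormedSpace ℝ G] [NormedAddCommGroup H] [NormedSpace ℝ H] {B : G → H} {v : E → G}
  {Ω : Set E} {x : E}

theorem hasFDerivAt_indicator_comp_of_eq_zero {s : Set E} (hx : x ∈ s)
    (hB : HasFDerivAt B (0 : G →L[ℝ] H) 0) (hB0 : B 0 = 0)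
    (hv : DifferentiableWithinAt ℝ v s x) (hvx : v x = 0) :
    HasFDerivAt (s.indicator (B ∘ v)) (0 : E →L[ℝ] H) x := by
  have hBv : HasFDerivWithinAt (B ∘ v) (0 : E →L[ℝ] H) s x := by
    rw [← hvx] at hB
    simpa using hB.comp_hasFDerivWithinAt x hv.hasFDerivWithinAt
  have hin : HasFDerivWithinAt (s.indicator (B ∘ v)) (0 : E →L[ℝ] H) s x :=
    hBv.congr (fun y hy => indicator_of_mem hy _) (indicator_of_mem hx _)
  have hout : HasFDerivWithinAt (s.indicator (B ∘ v)) (0 : E →L[ℝ] H) sᶜ x :=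
    (hasFDerivWithinAt_const (0 : H) x sᶜ).congr (fun y hy => indicator_of_notMem hy _)
      (by simp [indicator_of_mem hx, hvx, hB0])
  simpa using hin.union hout

theorem hasFDerivAt_indicator_closure_comp_of_mem (hΩ : IsOpen Ω) (hx : x ∈ Ω)
    (hB : DifferentiableAt ℝ B (v x)) (hv : DifferentiableAt ℝ v x) :
    HasFDerivAt ((closure Ω).indicator (B ∘ v)) (fderiv ℝ B (v x) ∘L fderiv ℝ v x) x := by
  refine (hB.hasFDerivAt.comp x hv.hasFDerivAt).congr_of_eventuallyEq ?_
  filter_upwards [hΩ.mem_nhds hx] with y hy using indicator_of_mem (subset_closure hy) _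

theorem hasFDerivAt_indicator_closure_comp (hΩ : IsOpen Ω)
    (hB : Differentiable ℝ B) (hB' : fderiv ℝ B 0 = 0) (hB0 : B 0 = 0)
    (hv : DifferentiableOn ℝ v (closure Ω)) (hbc : ∀ x ∈ frontier Ω, v x = 0) (x : E) :
    HasFDerivAt ((closure Ω).indicator (B ∘ v))
      (Ω.indicator (fun y => fderiv ℝ B (v y) ∘L fderiv ℝ v y) x) x := by
  by_cases hxΩ : x ∈ Ω
  · rw [indicator_of_mem hxΩ]
    exact hasFDerivAt_indicator_closure_comp_of_mem hΩ hxΩ (hB _)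
      (hv.differentiableAt (mem_of_superset (hΩ.mem_nhds hxΩ) subset_closure))
  rw [indicator_of_notMem hxΩ]
  by_cases hxc : x ∈ closure Ω
  · have hfr : x ∈ frontier Ω := ⟨hxc, by rwa [hΩ.interior_eq]⟩
    exact hasFDerivAt_indicator_comp_of_eq_zero hxc (hB' ▸ (hB 0).hasFDerivAt) hB0
      (hv x hxc) (hbc x hfr)
  · refine (hasFDerivAt_const (0 : H) x).congr_of_eventuallyEq ?_
    filter_upwards [isClosed_closure.isOpen_compl.mem_nhds hxc] with y hy
      using indicator_of_notMem hy _

theorem integrable_fderiv_indicator_closure_comp [FiniteDimensional ℝ E] [MeasurableSpace E]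
    [BorelSpace E] {μ : Measure E} [IsFiniteMeasureOnCompacts μ]
    (hΩ : IsOpen Ω) (hΩb : Bornology.IsBounded Ω) (hB : ContDiff ℝ 1 B)
    (hB' : fderiv ℝ B 0 = 0) (hB0 : B 0 = 0) (hv : ContDiffOn ℝ 1 v (closure Ω))
    (hbc : ∀ x ∈ frontier Ω, v x = 0) :
    Integrable (fderiv ℝ ((closure Ω).indicator (B ∘ v))) μ := by
  have hK : IsCompact (closure Ω) := hΩb.isCompact_closure
  have hF := hasFDerivAt_indicator_closure_comp hΩ (hB.differentiable one_ne_zero) hB' hB0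
    (hv.differentiableOn one_ne_zero) hbc
  obtain ⟨C, hC⟩ := hK.exists_bound_of_continuousOn
    ((hB.continuous_fderiv one_ne_zero).comp_continuousOn hv.continuousOn)
  obtain ⟨M, hM⟩ := hv.exists_bound_fderiv hK
  have hG : ContinuousOn (fun y => fderiv ℝ B (v y) ∘L fderiv ℝ v y) Ω :=
    ((hB.continuous_fderiv one_ne_zero).comp_continuousOn
      (hv.continuousOn.mono subset_closure)).clm_comp
      ((hv.mono subset_closure).continuousOn_fderiv_of_isOpen hΩ le_rfl)
  rw [funext fun x => (hF x).fderiv]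
  refine (integrable_indicator_iff (ε' := E →L[ℝ] H) hΩ.measurableSet).2 ?_
  refine IntegrableOn.of_bound ((measure_mono subset_closure).trans_lt hK.measure_lt_top)
    (hG.aestronglyMeasurable hΩ.measurableSet) (C * M) ?_
  filter_upwards [ae_restrict_mem hΩ.measurableSet] with x hx
  exact (ContinuousLinearMap.opNorm_comp_le _ _).trans (mul_le_mul (hC _ (subset_closure hx))
    (hM x (interior_maximal subset_closure hΩ hx)) (norm_nonneg _)
    ((norm_nonneg _).trans (hC _ (subset_closure hx))))

end ZeroExtension

section DotSelfSMul

variable {ι : Type*} [Fintype ι]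

noncomputable def dotSelfSMul (a : ι → ℝ) : ι → ℝ := (a ⬝ᵥ a) • a

theorem dotSelfSMul_zero : dotSelfSMul (0 : ι → ℝ) = 0 := by
  simp [dotSelfSMul]

theorem contDiff_dotSelfSMul : ContDiff ℝ 1 (dotSelfSMul : (ι → ℝ) → ι → ℝ) := by
  unfold dotSelfSMul dotProduct
  fun_prop

theorem hasFDerivAt_dotSelfSMul (a : ι → ℝ) :
    HasFDerivAt dotSelfSMul ((a ⬝ᵥ a) • ContinuousLinearMap.id ℝ (ι → ℝ) +
      (∑ i, (2 * a i) • ContinuousLinearMap.proj (R := ℝ) (φ := fun _ : ι => ℝ) i).smulRight a)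
      a := by
  have hcoord (i : ι) : HasFDerivAt (fun b : ι → ℝ => b i)
      (ContinuousLinearMap.proj (R := ℝ) (φ := fun _ : ι => ℝ) i) a := hasFDerivAt_apply i a
  have hdot : HasFDerivAt (fun b : ι → ℝ => b ⬝ᵥ b)
      (∑ i, (2 * a i) • ContinuousLinearMap.proj (R := ℝ) (φ := fun _ : ι => ℝ) i) a := by
    refine (HasFDerivAt.fun_sum (u := Finset.univ) fun i _ =>
      (hcoord i).fun_mul (hcoord i)).congr_fderiv ?_
    simp [two_mul, add_smul]
  exact hdot.smul (hasFDerivAt_id a)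

theorem fderiv_dotSelfSMul_apply (a h : ι → ℝ) :
    fderiv ℝ dotSelfSMul a h = (2 * (a ⬝ᵥ h)) • a + (a ⬝ᵥ a) • h := by
  rw [(hasFDerivAt_dotSelfSMul a).fderiv]
  simp [dotProduct, Finset.mul_sum, add_comm, mul_assoc]

theorem fderiv_dotSelfSMul_zero : fderiv ℝ dotSelfSMul (0 : ι → ℝ) = 0 := by
  ext h
  simp [fderiv_dotSelfSMul_apply]

end DotSelfSMul

section Emac

variable {d : ℕ}

theorem pd1_eq_fderiv_apply {v : (Fin d → ℝ) → (Fin d → ℝ)} {x : Fin d → ℝ}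
    (hv : DifferentiableAt ℝ v x) (i j : Fin d) :
    pd1 v i j x = fderiv ℝ v x (Pi.single j 1) i := by
  rw [pd1, ((hasFDerivAt_pi'.1 hv.hasFDerivAt) i).fderiv]
  rfl

theorem emac_integrand_eq_sum (p : Fin d → Fin d → ℝ) (a : Fin d → ℝ) :
    (∑ i, ∑ j, (p i j + p j i) * a j * a i) + (∑ j, p j j) * (∑ i, a i * a i)
      = ∑ i, (2 * (a ⬝ᵥ fun k => p k i) * a i + (a ⬝ᵥ a) * p i i) := by
  have hswap : ∑ i, ∑ j, p i j * a j * a i = ∑ i, ∑ j, p j i * a j * a i := by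
    rw [Finset.sum_comm]
    simp only [mul_right_comm]
  simp only [add_mul, Finset.sum_add_distrib, hswap, dotProduct, Finset.sum_mul, Finset.mul_sum]
  rw [Finset.sum_comm (f := fun i j => p j j * (a i * a i))]
  simp only [← Finset.sum_add_distrib]
  exact Finset.sum_congr rfl fun i _ => Finset.sum_congr rfl fun j _ => by ring

noncomputable def energyFlux (Ω : Set (Fin d → ℝ)) (v : (Fin d → ℝ) → (Fin d → ℝ)) :
    (Fin d → ℝ) → (Fin d → ℝ) :=
  (closure Ω).indicator (dotSelfSMul ∘ v)

theorem divergence_energyFlux {Ω : Set (Fin d → ℝ)} {v : (Fin d → ℝ) → (Fin d → ℝ)}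
    {x : Fin d → ℝ} (hΩ : IsOpen Ω) (hx : x ∈ Ω) (hv : DifferentiableAt ℝ v x) :
    divergence (energyFlux Ω v) x
      = (∑ i, ∑ j, (pd1 v i j x + pd1 v j i x) * v x j * v x i)
        + (∑ j, pd1 v j j x) * (∑ i, v x i * v x i) := by
  rw [divergence, energyFlux, (hasFDerivAt_indicator_closure_comp_of_mem hΩ hx
    ((contDiff_dotSelfSMul.differentiable one_ne_zero) _) hv).fderiv, emac_integrand_eq_sum]
  simp [fderiv_dotSelfSMul_apply, pd1_eq_fderiv_apply hv]

end Emac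

theorem emac_trilinear_self_zero_general (d : ℕ)
    (Ω : Set (Fin d → ℝ)) (hΩo : IsOpen Ω) (hΩb : Bornology.IsBounded Ω)
    (v : (Fin d → ℝ) → (Fin d → ℝ))
    (hv : ∀ i, ContDiffOn ℝ 1 (fun x => v x i) (closure Ω))
    (hbc : ∀ x ∈ frontier Ω, v x = 0) :
    emacC1 Ω v v v = 0 := by
  have hvC : ContDiffOn ℝ 1 v (closure Ω) := contDiffOn_pi.2 hv
  have hF := hasFDerivAt_indicator_closure_comp hΩo (contDiff_dotSelfSMul.differentiable one_ne_zero)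
    fderiv_dotSelfSMul_zero dotSelfSMul_zero (hvC.differentiableOn one_ne_zero) hbc
  have hFd : Differentiable ℝ (energyFlux Ω v) := fun x => (hF x).differentiableAt
  have hFi : Integrable (energyFlux Ω v) :=
    hFd.continuous.integrable_of_hasCompactSupport
      (HasCompactSupport.intro hΩb.isCompact_closure fun x hx => indicator_of_notMem hx _)
  have hF'i : Integrable (fderiv ℝ (energyFlux Ω v)) :=
    integrable_fderiv_indicator_closure_comp hΩo hΩb contDiff_dotSelfSMul
      fderiv_dotSelfSMul_zero dotSelfSMul_zero hvC hbc
  calc emacC1 Ω v v v = ∫ x in Ω, divergence (energyFlux Ω v) x :=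
        setIntegral_congr_fun hΩo.measurableSet fun x hx => (divergence_energyFlux hΩo hx
          ((hvC.differentiableOn one_ne_zero).differentiableAt
            (mem_of_superset (hΩo.mem_nhds hx) subset_closure))).symm
    _ = ∫ x, divergence (energyFlux Ω v) x :=
        setIntegral_eq_integral_of_forall_compl_eq_zero fun x hx => by
          simp [divergence, energyFlux, (hF x).fderiv, indicator_of_notMem hx]
    _ = 0 := integral_divergence_eq_zero hFi hF'i hFd

/-- `c(v,v,v) = 0` for C¹ fields vanishing on the boundary. -/
theorem emac_trilinear_self_zero (d : ℕ) (hd : d = 2 ∨ d = 3)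
    (Ω : Set (Fin d → ℝ)) (hΩo : IsOpen Ω) (hΩb : Bornology.IsBounded Ω)
    (v : (Fin d → ℝ) → (Fin d → ℝ))
    (hv : ∀ i, ContDiffOn ℝ 1 (fun x => v x i) (closure Ω))
    (hbc : ∀ x ∈ frontier Ω, v x = 0) :
    emacC1 Ω v v v = 0 :=
  emac_trilinear_self_zero_general d Ω hΩo hΩb v hv hbc
end

section
/- The EMAC trilinear form applied with a constant test vector vanishes: for u, w ∈ C¹(Ω̄; ℝ^d) vanishing on ∂Ω and any constant vector e ∈ ℝ^d, c(u, u, e) = 0, where c(u,v,w) = (2D(u)v, w) + ((∇·u)v, w). -/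
/-!
On `Ω` the integrand of `c(u, u, e)` is the divergence of the flux `F = (u·e) u + ½|u|² e`.
Because `u` is `C¹` up to the boundary and vanishes there, `u y = O(|y - x|)` near every boundary
point `x`, so the quadratic flux is `o(|y - x|)` and its extension by zero is differentiable on all
of `ℝᵈ`, with derivative `1_Ω • ∇F`. That extension is continuous with compact support and `∇F` is
bounded on `Ω` (compactness of `Ω̄`), so integrating each `∂ᵢFᵢ` by parts against the constant `1`
gives zero.
-/

open scoped BigOperators
open MeasureTheory

noncomputable def pd3 {d : ℕ} (u : (Fin d → ℝ) → (Fin d → ℝ)) (i j : Fin d)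
    (x : Fin d → ℝ) : ℝ :=
  fderiv ℝ (fun y => u y i) x (Pi.single j 1)

/-- The EMAC trilinear form `c(u,v,w) = (2D(u)v, w) + ((∇·u)v, w)`. -/
noncomputable def emacC3 {d : ℕ} (Ω : Set (Fin d → ℝ))
    (u v w : (Fin d → ℝ) → (Fin d → ℝ)) : ℝ :=
  ∫ x in Ω,
    ((∑ i, ∑ j, (pd3 u i j x + pd3 u j i x) * v x j * w x i)
      + (∑ j, pd3 u j j x) * (∑ i, v x i * w x i))

open Set Filter Topology Asymptotics

theorem isLittleO_mul_of_isBigO_sub {E : Type*} [NormedAddCommGroup E] {s : Set E} {x : E}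
    {f g : E → ℝ} (hf : f =O[𝓝[s] x] (· - x)) (hg : g =O[𝓝[s] x] (· - x)) :
    (fun y => f y * g y) =o[𝓝[s] x] (· - x) := by
  have hg0 : g =o[𝓝[s] x] (fun _ => (1 : ℝ)) :=
    (isLittleO_one_iff ℝ).2 <| hg.trans_tendsto <| tendsto_sub_nhds_zero_iff.2 <|
      tendsto_nhdsWithin_of_tendsto_nhds tendsto_id
  simpa using (hf.norm_right.mul_isLittleO hg0).norm_right

section

variable {E F : Type*} [NormedAddCommGroup E] [NormedSpace ℝ E] [NormedAddCommGroup F]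
  [NormedSpace ℝ F]

theorem ContDiffWithinAt.exists_eventually_norm_fderiv_le {f : E → F} {s : Set E} {x : E}
    (hf : ContDiffWithinAt ℝ 1 f s x) (hx : x ∈ s) :
    ∃ C, ∀ᶠ y in 𝓝 x, y ∈ interior s → ‖fderiv ℝ f y‖ ≤ C := by
  obtain ⟨t, ht, -, f', hf', hf'c⟩ :=
    (contDiffWithinAt_succ_iff_hasFDerivWithinAt (n := 0) (by simp)).1 (by simpa using hf)
  rw [insert_eq_of_mem hx] at ht
  -- `f'` is continuous within `t` at `x` and equals `fderiv ℝ f` wherever `t` is a neighbourhood.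
  have hbound : ∀ᶠ y in 𝓝[t] x, ‖f' y‖ < ‖f' x‖ + 1 :=
    hf'c.continuousWithinAt.norm.eventually (gt_mem_nhds (lt_add_one _))
  refine ⟨‖f' x‖ + 1, ?_⟩
  filter_upwards [eventually_eventually_nhds.2 (mem_nhdsWithin_iff_eventually.1 ht),
    eventually_nhdsWithin_iff.1 hbound] with y hyt hyb hys
  have htn : t ∈ 𝓝 y := by
    filter_upwards [hyt, mem_interior_iff_mem_nhds.1 hys] with z hzt hzs using hzt hzs
  rw [((hf' y (mem_of_mem_nhds htn)).hasFDerivAt htn).fderiv]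
  exact (hyb (mem_of_mem_nhds htn)).le

theorem ContDiffOn.exists_norm_fderiv_le_of_isCompact {f : E → F} {s : Set E}
    (hf : ContDiffOn ℝ 1 f s) (hs : IsCompact s) :
    ∃ C, ∀ y ∈ interior s, ‖fderiv ℝ f y‖ ≤ C := by
  have key := hs.induction_on (p := fun t => ∃ C, ∀ y ∈ t ∩ interior s, ‖fderiv ℝ f y‖ ≤ C)
    ⟨0, by simp⟩ (fun t t' htt' ⟨C, hC⟩ => ⟨C, fun y hy => hC y ⟨htt' hy.1, hy.2⟩⟩)
    (fun t t' ⟨C, hC⟩ ⟨C', hC'⟩ => ⟨max C C', fun y ⟨hy, hys⟩ => hy.elim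
      (fun h => le_max_of_le_left (hC y ⟨h, hys⟩)) (fun h => le_max_of_le_right (hC' y ⟨h, hys⟩))⟩)
    (fun x hx => by
      obtain ⟨C, hC⟩ := (hf x hx).exists_eventually_norm_fderiv_le hx
      exact ⟨_, mem_nhdsWithin_of_mem_nhds hC, C, fun y hy => hy.1 hy.2⟩)
  simpa only [inter_eq_right.2 interior_subset] using key

theorem hasFDerivAt_indicator_of_isLittleO_frontier {Ω : Set E} (hΩ : IsOpen Ω) {f : E → F}
    {f' : E → E →L[ℝ] F} (hf : ∀ x ∈ Ω, HasFDerivAt f (f' x) x)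
    (hfr : ∀ x ∈ frontier Ω, f =o[𝓝[Ω] x] (· - x)) (x : E) :
    HasFDerivAt (Ω.indicator f) (Ω.indicator f' x) x := by
  by_cases hxΩ : x ∈ Ω
  · rw [indicator_of_mem hxΩ]
    exact (hf x hxΩ).congr_of_eventuallyEq
      (eventuallyEq_of_mem (hΩ.mem_nhds hxΩ) fun z hz => indicator_of_mem hz f)
  have hsmall : f =o[𝓝[Ω] x] (· - x) := by
    by_cases hcl : x ∈ closure Ω
    · exact hfr x ⟨hcl, by rwa [hΩ.interior_eq]⟩
    · rw [notMem_closure_iff_nhdsWithin_eq_bot.1 hcl]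
      simp
  rw [indicator_of_notMem hxΩ, hasFDerivAt_iff_isLittleO]
  simp only [indicator_of_notMem hxΩ, sub_zero, zero_apply]
  rw [← nhdsWithin_univ, ← union_compl_self Ω, nhdsWithin_union]
  refine IsLittleO.sup ?_ ?_
  · exact hsmall.congr' (eventually_mem_nhdsWithin.mono fun z hz => (indicator_of_mem hz f).symm)
      EventuallyEq.rfl
  · exact (isLittleO_zero _ _).congr'
      (eventually_mem_nhdsWithin.mono fun z hz => (indicator_of_notMem hz f).symm) EventuallyEq.rfl

variable [FiniteDimensional ℝ E] [MeasurableSpace E] [BorelSpace E] {μ : Measure E}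

theorem integral_fderiv_apply_eq_zero_s3 [μ.IsAddHaarMeasure] {g : E → F}
    (hg : Differentiable ℝ g) (hgi : Integrable g μ) {v : E}
    (hg'i : Integrable (fun x => fderiv ℝ g x v) μ) :
    ∫ x, fderiv ℝ g x v ∂μ = 0 := by
  simpa using integral_smul_fderiv_eq_neg_fderiv_smul_of_integrable (μ := μ) (f := fun _ => (1 : ℝ))
    (v := v) (by simp) (by simpa using hg'i) (by simpa using hgi) (by simp) (fun x _ => hg x)

theorem integrableOn_fderiv_apply_of_contDiffOn_closure [IsFiniteMeasureOnCompacts μ] {Ω : Set E}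
    (hΩo : IsOpen Ω) (hΩb : Bornology.IsBounded Ω) {f : E → F}
    (hf : ContDiffOn ℝ 1 f (closure Ω)) (v : E) :
    IntegrableOn (fun x => fderiv ℝ f x v) Ω μ := by
  obtain ⟨C, hC⟩ := hf.exists_norm_fderiv_le_of_isCompact hΩb.isCompact_closure
  have hcont : ContinuousOn (fun x => fderiv ℝ f x v) Ω :=
    ((hf.mono subset_closure).continuousOn_fderiv_of_isOpen hΩo le_rfl).clm_apply
      continuousOn_const
  refine IntegrableOn.of_bound hΩb.measure_lt_top (hcont.aestronglyMeasurable hΩo.measurableSet)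
    (C * ‖v‖) ?_
  filter_upwards [ae_restrict_mem hΩo.measurableSet] with x hx
  exact (fderiv ℝ f x).le_of_opNorm_le (hC x (interior_maximal subset_closure hΩo hx)) v

theorem setIntegral_fderiv_eq_zero_of_isLittleO_frontier [μ.IsAddHaarMeasure] {Ω : Set E}
    (hΩo : IsOpen Ω) (hΩb : Bornology.IsBounded Ω) {f : E → ℝ}
    (hf : ContDiffOn ℝ 1 f (closure Ω)) (hfr : ∀ x ∈ frontier Ω, f =o[𝓝[Ω] x] (· - x)) (v : E) :
    ∫ x in Ω, fderiv ℝ f x v ∂μ = 0 := by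
  have hG := hasFDerivAt_indicator_of_isLittleO_frontier hΩo (fun x hx =>
    ((hf.differentiableOn one_ne_zero).differentiableAt
      (mem_of_superset (hΩo.mem_nhds hx) subset_closure)).hasFDerivAt) hfr
  have hG' : (fun x => fderiv ℝ (Ω.indicator f) x v) = Ω.indicator (fun x => fderiv ℝ f x v) := by
    funext x
    rw [(hG x).fderiv]
    by_cases hx : x ∈ Ω <;> simp [hx]
  rw [← integral_indicator hΩo.measurableSet, ← hG']
  refine integral_fderiv_apply_eq_zero_s3 (fun x => (hG x).differentiableAt) ?_ ?_
  · refine Continuous.integrable_of_hasCompactSupport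
      (continuous_iff_continuousAt.2 fun x => (hG x).continuousAt)
      (HasCompactSupport.intro hΩb.isCompact_closure fun x hx =>
        indicator_of_notMem (fun h => hx (subset_closure h)) f)
  · rw [hG', integrable_indicator_iff hΩo.measurableSet]
    exact integrableOn_fderiv_apply_of_contDiffOn_closure hΩo hΩb hf v

end

section

variable {d : ℕ}

noncomputable def emacFlux (u : (Fin d → ℝ) → Fin d → ℝ) (e : Fin d → ℝ) (i : Fin d)
    (x : Fin d → ℝ) : ℝ :=
  u x i * ∑ j, u x j * e j + e i / 2 * ∑ j, u x j * u x j

theorem emacFlux_isLittleO {u : (Fin d → ℝ) → Fin d → ℝ} {s : Set (Fin d → ℝ)} {x : Fin d → ℝ}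
    (hu : ∀ j, (fun y => u y j) =O[𝓝[s] x] (· - x)) (e : Fin d → ℝ) (i : Fin d) :
    emacFlux u e i =o[𝓝[s] x] (· - x) := by
  have hquad : ∀ j k, (fun y => u y j * u y k) =o[𝓝[s] x] (· - x) := fun j k =>
    isLittleO_mul_of_isBigO_sub (hu j) (hu k)
  have hsum : emacFlux u e i =
      fun y => ∑ j, (e j * (u y i * u y j) + e i / 2 * (u y j * u y j)) := by
    funext y
    simp only [emacFlux, Finset.mul_sum, Finset.sum_add_distrib]
    congr 1
    exact Finset.sum_congr rfl fun j _ => by ring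
  rw [hsum]
  exact IsLittleO.fun_sum fun j _ =>
    ((hquad i j).const_mul_left _).add ((hquad j j).const_mul_left _)

theorem sum_fderiv_emacFlux {u : (Fin d → ℝ) → Fin d → ℝ} {x : Fin d → ℝ}
    (hu : ∀ j, DifferentiableAt ℝ (fun y => u y j) x) (e : Fin d → ℝ) :
    ∑ i, fderiv ℝ (emacFlux u e i) x (Pi.single i 1) =
      (∑ i, ∑ j, (pd3 u i j x + pd3 u j i x) * u x j * e i)
        + (∑ j, pd3 u j j x) * ∑ i, u x i * e i := by
  set D := fun j => fderiv ℝ (fun y => u y j) x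
  have hD : ∀ i, HasFDerivAt (emacFlux u e i) (u x i • ∑ j, e j • D j
      + (∑ j, u x j * e j) • D i + (e i / 2) • ∑ j, (u x j • D j + u x j • D j)) x := fun i => by
    have h := fun j => (hu j).hasFDerivAt
    exact ((h i).mul (HasFDerivAt.fun_sum fun j _ => (h j).mul_const (e j))).add
      ((HasFDerivAt.fun_sum fun j _ => (h j).mul (h j)).const_mul (e i / 2))
  have hpd : ∀ i j, D i (Pi.single j 1) = pd3 u i j x := fun _ _ => rfl
  simp only [fun i => (hD i).fderiv, add_apply, smul_apply, sum_apply, smul_eq_mul, hpd, add_mul,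
    Finset.sum_add_distrib]
  have hconv : ∑ i, u x i * ∑ j, e j * pd3 u j i x = ∑ i, ∑ j, pd3 u i j x * u x j * e i := by
    rw [Finset.sum_comm]
    simp only [Finset.mul_sum]
    exact Finset.sum_congr rfl fun i _ => Finset.sum_congr rfl fun j _ => by ring
  have hdiv : ∑ i, (∑ j, u x j * e j) * pd3 u i i x = (∑ j, pd3 u j j x) * ∑ i, u x i * e i := by
    rw [← Finset.mul_sum, mul_comm]
  have hgrad : ∑ i, e i / 2 * (∑ j, u x j * pd3 u j i x + ∑ j, u x j * pd3 u j i x)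
      = ∑ i, ∑ j, pd3 u j i x * u x j * e i := by
    simp only [← two_mul, Finset.mul_sum]
    exact Finset.sum_congr rfl fun i _ => Finset.sum_congr rfl fun j _ => by ring
  rw [hconv, hdiv, hgrad]
  ring

end

/-- `c(u, u, e) = 0` for a constant test vector `e`. -/
theorem emac_constant_test_zero (d : ℕ)
    (Ω : Set (Fin d → ℝ)) (hΩo : IsOpen Ω) (hΩb : Bornology.IsBounded Ω)
    (u : (Fin d → ℝ) → (Fin d → ℝ))
    (hu : ∀ i, ContDiffOn ℝ 1 (fun x => u x i) (closure Ω))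
    (hbc : ∀ x ∈ frontier Ω, u x = 0)
    (e : Fin d → ℝ) :
    emacC3 Ω u u (fun _ => e) = 0 := by
  have hF : ∀ i, ContDiffOn ℝ 1 (emacFlux u e i) (closure Ω) := fun i => by
    unfold emacFlux
    fun_prop
  have hFr : ∀ i, ∀ x ∈ frontier Ω, emacFlux u e i =o[𝓝[Ω] x] (· - x) := fun i x hx =>
    (emacFlux_isLittleO (fun j => by
      simpa [hbc x hx] using ((hu j).differentiableOn one_ne_zero x hx.1).isBigO_sub) e i).mono
      (nhdsWithin_mono x subset_closure)
  have hdiff : ∀ x ∈ Ω, ∀ j, DifferentiableAt ℝ (fun y => u y j) x := fun x hx j =>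
    ((hu j).differentiableOn one_ne_zero).differentiableAt
      (mem_of_superset (hΩo.mem_nhds hx) subset_closure)
  calc emacC3 Ω u u (fun _ => e)
      = ∫ x in Ω, ∑ i, fderiv ℝ (emacFlux u e i) x (Pi.single i 1) :=
        setIntegral_congr_fun hΩo.measurableSet fun x hx =>
          (sum_fderiv_emacFlux (hdiff x hx) e).symm
    _ = ∑ i, ∫ x in Ω, fderiv ℝ (emacFlux u e i) x (Pi.single i 1) :=
        integral_finsetSum _ fun i _ =>
          integrableOn_fderiv_apply_of_contDiffOn_closure hΩo hΩb (hF i) _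
    _ = 0 := Finset.sum_eq_zero fun i _ =>
        setIntegral_fderiv_eq_zero_of_isLittleO_frontier hΩo hΩb (hF i) (hFr i) _
end

section
/- Uniqueness criterion via inverse inequality: suppose e ∈ H satisfies Δt^{-1}‖e‖² + ν‖∇e‖² ≤ C Δt^{-1/2} ‖∇e‖^{3/2} ‖e‖^{1/2} and the inverse inequality ‖∇e‖ ≤ C_inv h^{-1} ‖e‖ holds. If Δt < (C C_inv^{3/2})^{-2} h^3, then e = 0. -/
/-- uniqueness criterion via the inverse inequality. -/
theorem uniqueness_via_inverse_inequality
    (E : Type*) [NormedAddCommGroup E]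
    (e : E) (G : ℝ) (hG : 0 ≤ G)
    (C Cinv ν h Δt : ℝ)
    (hC : 0 < C) (hCinv : 0 < Cinv) (hν : 0 < ν) (hh : 0 < h) (hΔtpos : 0 < Δt)
    (h1 : Δt⁻¹ * ‖e‖ ^ 2 + ν * G ^ 2
      ≤ C * Δt ^ (-(1 : ℝ) / 2) * G ^ ((3 : ℝ) / 2) * ‖e‖ ^ ((1 : ℝ) / 2))
    (h2 : G ≤ Cinv * h⁻¹ * ‖e‖)
    (hΔt : Δt < (C * Cinv ^ ((3 : ℝ) / 2)) ^ (-(2 : ℝ)) * h ^ 3) :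
    e = 0 := by
  by_contra he
  have hx : 0 < ‖e‖ := norm_pos_iff.mpr he
  set x := ‖e‖ with hxdef
  have hG2 : 0 ≤ ν * G ^ 2 := by positivity
  have hstep1 : Δt⁻¹ * x ^ 2 ≤ C * Δt ^ (-(1:ℝ)/2) * G ^ ((3:ℝ)/2) * x ^ ((1:ℝ)/2) := by
    linarith
  have hGle : G ^ ((3:ℝ)/2) ≤ (Cinv * h⁻¹ * x) ^ ((3:ℝ)/2) :=
    Real.rpow_le_rpow hG h2 (by norm_num)
  have hx12 : (0:ℝ) ≤ x ^ ((1:ℝ)/2) := Real.rpow_nonneg hx.le _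
  have hCΔ : 0 < C * Δt ^ (-(1:ℝ)/2) := by positivity
  have hstep2 : Δt⁻¹ * x ^ 2
      ≤ C * Δt ^ (-(1:ℝ)/2) * (Cinv * h⁻¹ * x) ^ ((3:ℝ)/2) * x ^ ((1:ℝ)/2) :=
    hstep1.trans (mul_le_mul_of_nonneg_right
      (mul_le_mul_of_nonneg_left hGle hCΔ.le) hx12)
  have hexp : (Cinv * h⁻¹ * x) ^ ((3:ℝ)/2)
      = Cinv ^ ((3:ℝ)/2) * (h⁻¹) ^ ((3:ℝ)/2) * x ^ ((3:ℝ)/2) := by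
    rw [Real.mul_rpow (by positivity) hx.le, Real.mul_rpow (by positivity) (by positivity)]
  have hxx : x ^ ((3:ℝ)/2) * x ^ ((1:ℝ)/2) = x ^ 2 := by
    rw [← Real.rpow_add hx]
    norm_num
  set M : ℝ := C * Cinv ^ ((3:ℝ)/2) * (h⁻¹) ^ ((3:ℝ)/2) with hMdef
  have hM : 0 < M := by positivity
  have hstep3 : Δt⁻¹ * x ^ 2 ≤ M * Δt ^ (-(1:ℝ)/2) * x ^ 2 := by
    calc Δt⁻¹ * x ^ 2 ≤ _ := hstep2
    _ = M * Δt ^ (-(1:ℝ)/2) * x ^ 2 := by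
        rw [hexp, hMdef]
        rw [show C * Δt ^ (-(1:ℝ)/2) * (Cinv ^ ((3:ℝ)/2) * (h⁻¹) ^ ((3:ℝ)/2) * x ^ ((3:ℝ)/2)) * x ^ ((1:ℝ)/2)
          = C * Cinv ^ ((3:ℝ)/2) * (h⁻¹) ^ ((3:ℝ)/2) * Δt ^ (-(1:ℝ)/2) * (x ^ ((3:ℝ)/2) * x ^ ((1:ℝ)/2)) by ring]
        rw [hxx]
  have hx2 : (0:ℝ) < x ^ 2 := by positivity
  have hstep4 : Δt⁻¹ ≤ M * Δt ^ (-(1:ℝ)/2) :=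
    le_of_mul_le_mul_right (by linarith [hstep3]) hx2
  -- multiply by Δt
  have hΔhalf : Δt * Δt ^ (-(1:ℝ)/2) = Δt ^ ((1:ℝ)/2) := by
    nth_rewrite 1 [← Real.rpow_one Δt]
    rw [← Real.rpow_add hΔtpos]
    norm_num
  have hstep5 : 1 ≤ M * Δt ^ ((1:ℝ)/2) := by
    have := mul_le_mul_of_nonneg_left hstep4 hΔtpos.le
    rw [mul_inv_cancel₀ hΔtpos.ne'] at this
    calc (1:ℝ) ≤ Δt * (M * Δt ^ (-(1:ℝ)/2)) := this
    _ = M * (Δt * Δt ^ (-(1:ℝ)/2)) := by ring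
    _ = M * Δt ^ ((1:ℝ)/2) := by rw [hΔhalf]
  have hroot : M⁻¹ ≤ Δt ^ ((1:ℝ)/2) := by
    rw [inv_le_iff_one_le_mul₀ hM, mul_comm]
    exact hstep5
  have hsq : M⁻¹ ^ 2 ≤ Δt := by
    have h0 : (0:ℝ) ≤ M⁻¹ := (inv_pos.mpr hM).le
    have := mul_le_mul hroot hroot h0 (Real.rpow_nonneg hΔtpos.le _)
    calc M⁻¹ ^ 2 = M⁻¹ * M⁻¹ := sq M⁻¹
    _ ≤ Δt ^ ((1:ℝ)/2) * Δt ^ ((1:ℝ)/2) := this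
    _ = Δt := by rw [← Real.rpow_add hΔtpos]; norm_num
  -- now compute M⁻¹ ^ 2 = (C * Cinv^{3/2})^{-2} * h^3
  have hkey : (C * Cinv ^ ((3:ℝ)/2)) ^ (-(2:ℝ)) * h ^ 3 = M⁻¹ ^ 2 := by
    set A := C * Cinv ^ ((3:ℝ)/2) with hA'
    have hA : 0 < A := by positivity
    have hMinv : M⁻¹ = A⁻¹ * h ^ ((3:ℝ)/2) := by
      rw [hMdef, Real.inv_rpow hh.le, mul_inv, inv_inv]
    rw [hMinv, mul_pow, Real.rpow_neg hA.le, Real.rpow_two, ← inv_pow]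
    congr 1
    rw [← Real.rpow_natCast (h ^ ((3:ℝ)/2)) 2, ← Real.rpow_mul hh.le,
      ← Real.rpow_natCast h 3]
    norm_num
  rw [hkey] at hΔt
  linarith
end
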